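/- arXiv:math/0404018 — 2 statements merged into one kernel-verified Lean document; each statement's English description precedes it below -/
import Mathlib

section
/- Let A be a unital separable C*-algebra. For any ε > 0 and any finite subset F ⊆ A, there exist δ > 0 and a finite subset G ⊆ A with the following property: for any unital C*-algebra B, any tracial state τ on B, and any unital completely positive linear map φ : A → B which is G-δ-multiplicative, there exists a tracial state σ on A such that |τ(φ(a)) − σ(a)| < ε for all a ∈ F. -/
open scoped ComplexOrder

section Defs

variable {A B : Type*}

/-- `p` is a projection. -/
def IsProjection [Mul A] [Star A] (p : A) : Prop := star p = p ∧ p * p = p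

/-- Murray–von Neumann equivalence. -/
def MvNEquiv [Mul A] [Star A] (p q : A) : Prop := ∃ v, star v * v = p ∧ v * star v = q

/-- A tracial state on a unital complex *-algebra. -/
structure IsTracialState [Ring A] [StarRing A] [Algebra ℂ A] (τ : A →ₗ[ℂ] ℂ) : Prop where
  pos : ∀ a : A, 0 ≤ τ (star a * a)
  unit : τ 1 = 1
  tracial : ∀ a b : A, τ (a * b) = τ (b * a)

/-- A completely positive linear map. -/
def IsCPMap [Ring A] [StarRing A] [Algebra ℂ A] [Ring B] [StarRing B] [Algebra ℂ B]
    (φ : A →ₗ[ℂ] B) : Prop :=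
  ∀ (n : ℕ) (M : Matrix (Fin n) (Fin n) A), (∃ C : Matrix (Fin n) (Fin n) A, M = star C * C) →
    ∃ D : Matrix (Fin n) (Fin n) B, M.map φ = star D * D

/-- A C*-algebra is simple if its only closed two-sided ideals are `⊥` and `⊤`. -/
def IsSimpleCStar (A : Type*) [NonUnitalNonAssocRing A] [TopologicalSpace A] : Prop :=
  ∀ I : TwoSidedIdeal A, IsClosed (I : Set A) → I = ⊥ ∨ I = ⊤

/-- Real rank zero: invertible selfadjoint elements are dense in selfadjoint elements. -/
def HasRealRankZero (A : Type*) [NormedRing A] [StarRing A] : Prop :=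
  ∀ a : A, star a = a → ∀ ε : ℝ, 0 < ε → ∃ b : A, star b = b ∧ IsUnit b ∧ ‖a - b‖ < ε

/-- Stably finite: every isometry in every matrix algebra is a unitary. -/
def IsStablyFinite (A : Type*) [Ring A] [StarRing A] : Prop :=
  ∀ (n : ℕ) (v : Matrix (Fin n) (Fin n) A), star v * v = 1 → v * star v = 1

/-- Tracial rank zero. -/
def HasTracialRankZero (A : Type*) [NormedRing A] [StarRing A] [NormedAlgebra ℂ A] [StarModule ℂ A] : Prop :=
  ∀ (F : Finset A) (ε : ℝ), 0 < ε → ∀ a : A, a ≠ 0 → (∃ b : A, a = star b * b) →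
    ∃ (S : StarSubalgebra ℂ A) (p : A), FiniteDimensional ℂ S ∧ p ∈ S ∧ IsProjection p ∧
      (∀ x ∈ S, p * x = x ∧ x * p = x) ∧
      (∀ x ∈ F, ‖x * p - p * x‖ < ε) ∧
      (∀ x ∈ F, ∃ b ∈ S, ‖p * x * p - b‖ < ε) ∧
      ∃ q ∈ closure {y : A | ∃ x : A, y = a * x * a}, IsProjection q ∧ MvNEquiv (1 - p) q

/-- The complexification of a real-valued continuous function. -/
noncomputable def ofRealCM {X : Type*} [TopologicalSpace X] (f : C(X, ℝ)) : C(X, ℂ) :=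
  ⟨fun x => (f x : ℂ), Complex.continuous_ofReal.comp f.continuous⟩

open MeasureTheory in
/-- `μ` is the regular Borel probability measure representing `τ ∘ φ` on `X`. -/
def RepMeasure {X : Type*} [TopologicalSpace X] [MeasurableSpace X]
    [Ring A] [StarRing A] [Algebra ℂ A]
    (φ : C(X, ℂ) →ₗ[ℂ] A) (τ : A →ₗ[ℂ] ℂ) (μ : Measure X) : Prop :=
  IsProbabilityMeasure μ ∧ μ.Regular ∧
    ∀ f : C(X, ℝ), τ (φ (ofRealCM f)) = ((∫ x, f x ∂μ : ℝ) : ℂ)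

end Defs

universe u v

section Helpers
open Filter Topology

-- helper: bound for positive unital functional
lemma posBound {A : Type*} [CStarAlgebra A] (ω : A →ₗ[ℂ] ℂ)
    (hpos : ∀ b : A, 0 ≤ ω (star b * b)) (h1 : ω 1 = 1) (a : A) :
    ‖ω a‖ ≤ 2 * ‖a‖ := by
  letI := CStarAlgebra.spectralOrder A
  letI := CStarAlgebra.spectralOrderedRing A
  have mono : ∀ x : A, 0 ≤ x → 0 ≤ ω x := by
    intro x hx
    have hb : (0:A) ≤ CFC.sqrt x := CFC.sqrt_nonneg x
    have hsa : star (CFC.sqrt x) = CFC.sqrt x := (IsSelfAdjoint.of_nonneg hb)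
    have : star (CFC.sqrt x) * CFC.sqrt x = x := by
      rw [hsa, CFC.sqrt_mul_sqrt_self x hx]
    rw [← this]
    exact hpos _
  have algr : ∀ r : ℝ, ω (algebraMap ℝ A r) = (r : ℂ) := by
    intro r
    have : algebraMap ℝ A r = (r : ℂ) • (1 : A) := by
      rw [IsScalarTower.algebraMap_apply ℝ ℂ A, Algebra.algebraMap_eq_smul_one]
      norm_num
    rw [this, map_smul, h1, smul_eq_mul, mul_one]
  have sa_bound : ∀ x : A, IsSelfAdjoint x → ‖ω x‖ ≤ ‖x‖ := by
    intro x hx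
    have h1' : 0 ≤ ω (algebraMap ℝ A ‖x‖ - x) :=
      mono _ (sub_nonneg.2 hx.le_algebraMap_norm_self)
    have h2' : 0 ≤ ω (x - (-(algebraMap ℝ A ‖x‖))) :=
      mono _ (sub_nonneg.2 hx.neg_algebraMap_norm_le_self)
    rw [map_sub, algr] at h1'
    rw [map_sub, map_neg, algr, sub_neg_eq_add] at h2'
    rw [Complex.le_def] at h1' h2'
    simp only [Complex.sub_re, Complex.sub_im, Complex.add_re, Complex.add_im,
      Complex.ofReal_re, Complex.ofReal_im, Complex.zero_re, Complex.zero_im] at h1' h2'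
    have him : (ω x).im = 0 := by linarith [h1'.2, h2'.2]
    have hre1 : (ω x).re ≤ ‖x‖ := by linarith [h1'.1]
    have hre2 : -‖x‖ ≤ (ω x).re := by linarith [h2'.1]
    have : ω x = ((ω x).re : ℂ) := Complex.ext rfl (by simp [him])
    rw [this, Complex.norm_real, Real.norm_eq_abs, abs_le]
    exact ⟨hre2, hre1⟩
  set x := (2:ℂ)⁻¹ • (a + star a) with hxdef
  set y := (2:ℂ)⁻¹ • (Complex.I • (star a - a)) with hydef
  have hxsa : IsSelfAdjoint x := by
    rw [IsSelfAdjoint, hxdef, star_smul, star_add, star_star, add_comm]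
    simp
  have hysa : IsSelfAdjoint y := by
    rw [IsSelfAdjoint, hydef, star_smul, star_smul, star_sub, star_star]
    simp only [Complex.star_def, Complex.conj_I, map_inv₀, Complex.conj_ofNat]
    rw [neg_smul, smul_sub, smul_sub, neg_sub, smul_sub]
  have hxy : x + Complex.I • y = a := by
    rw [hxdef, hydef, smul_smul, smul_smul]
    have h2 : Complex.I * (2:ℂ)⁻¹ * Complex.I = -(2:ℂ)⁻¹ := by
      linear_combination (2:ℂ)⁻¹ * Complex.I_mul_I
    rw [h2]
    match_scalars <;> ring
  have hnx : ‖x‖ ≤ ‖a‖ := by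
    rw [hxdef]
    calc ‖(2:ℂ)⁻¹ • (a + star a)‖ = ‖(2:ℂ)⁻¹‖ * ‖a + star a‖ := norm_smul _ _
    _ ≤ (2⁻¹ : ℝ) * (‖a‖ + ‖star a‖) := by
        gcongr
        · simp
        · exact norm_add_le _ _
    _ = ‖a‖ := by rw [norm_star]; ring
  have hny : ‖y‖ ≤ ‖a‖ := by
    rw [hydef]
    calc ‖(2:ℂ)⁻¹ • (Complex.I • (star a - a))‖ = ‖(2:ℂ)⁻¹‖ * (‖Complex.I‖ * ‖star a - a‖) := by
          rw [norm_smul, norm_smul]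
    _ ≤ (2⁻¹ : ℝ) * (1 * (‖star a‖ + ‖a‖)) := by
        gcongr
        · simp
        · simp
        · exact norm_sub_le _ _
    _ = ‖a‖ := by rw [norm_star]; ring
  have hsm : ω (Complex.I • y) = Complex.I * ω y := by rw [map_smul, smul_eq_mul]
  calc ‖ω a‖ = ‖ω x + Complex.I * ω y‖ := by
        rw [← hxy, map_add, hsm]
  _ ≤ ‖ω x‖ + ‖Complex.I * ω y‖ := norm_add_le _ _
  _ = ‖ω x‖ + ‖ω y‖ := by rw [norm_mul, Complex.norm_I, one_mul]
  _ ≤ ‖x‖ + ‖y‖ := add_le_add (sa_bound x hxsa) (sa_bound y hysa)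
  _ ≤ 2 * ‖a‖ := by linarith

lemma clusterMemClosed {v : ℕ → ℂ} {z : ℂ} {C : Set ℂ} (hC : IsClosed C)
    (hv : ∀ n, v n ∈ C) (h : MapClusterPt z Filter.atTop v) : z ∈ C := by
  have hle : Filter.map v Filter.atTop ≤ Filter.principal C :=
    Filter.le_principal_iff.mpr (Filter.mem_map.mpr (Filter.Eventually.of_forall hv))
  have : ClusterPt z (Filter.principal C) := h.clusterPt.mono hle
  exact hC.closure_subset (mem_closure_iff_clusterPt.mpr this)

lemma clusterEqOfTendsto {v : ℕ → ℂ} {z y : ℂ} (h : MapClusterPt z Filter.atTop v)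
    (hv : Filter.Tendsto v Filter.atTop (𝓝 y)) : z = y := by
  have : ClusterPt z (𝓝 y) := h.clusterPt.mono hv
  exact eq_of_nhds_neBot this

lemma isClosedNonnegC : IsClosed {z : ℂ | 0 ≤ z} := by
  have : {z : ℂ | 0 ≤ z} = Complex.re ⁻¹' Set.Ici 0 ∩ Complex.im ⁻¹' {0} := by
    ext z
    simp only [Set.mem_setOf_eq, Complex.le_def, Set.mem_inter_iff, Set.mem_preimage,
      Set.mem_Ici, Set.mem_singleton_iff, Complex.zero_re, Complex.zero_im]
    exact ⟨fun h => ⟨h.1, h.2.symm⟩, fun h => ⟨h.1, h.2.symm⟩⟩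
  rw [this]
  exact (isClosed_Ici.preimage Complex.continuous_re).inter
    (isClosed_singleton.preimage Complex.continuous_im)

lemma cpPos {A : Type u} {B : Type v} [CStarAlgebra A] [CStarAlgebra B]
    (φ : A →ₗ[ℂ] B) (hφ : IsCPMap φ) (a : A) : ∃ d : B, φ (star a * a) = star d * d := by
  obtain ⟨D, hD⟩ := hφ 1 (star (Matrix.of fun _ _ : Fin 1 => a) * (Matrix.of fun _ _ : Fin 1 => a))
    ⟨_, rfl⟩
  refine ⟨D 0 0, ?_⟩
  have h00 := congrFun (congrFun hD 0) 0
  simpa [Matrix.mul_apply, Matrix.map_apply, Matrix.star_apply, Matrix.of_apply,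
    Fin.sum_univ_one] using h00

end Helpers


set_option maxHeartbeats 1000000 in
/-- approximate tracial states pull back along almost multiplicative
unital completely positive maps. -/
theorem stmt0 {A : Type u} [CStarAlgebra A] [TopologicalSpace.SeparableSpace A]
    (ε : ℝ) (hε : 0 < ε) (F : Finset A) :
    ∃ (δ : ℝ) (G : Finset A), 0 < δ ∧
      ∀ (B : Type v) [CStarAlgebra B], ∀ (τ : B →ₗ[ℂ] ℂ), IsTracialState τ →
        ∀ φ : A →ₗ[ℂ] B, φ 1 = 1 → IsCPMap φ →
          (∀ a ∈ G, ∀ b ∈ G, ‖φ (a * b) - φ a * φ b‖ < δ) →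
          ∃ σ : A →ₗ[ℂ] ℂ, IsTracialState σ ∧
            ∀ a ∈ F, ‖τ (φ a) - σ a‖ < ε := by
  classical
  by_contra hcon
  push_neg at hcon
  have hne : Nonempty A := ⟨1⟩
  obtain ⟨e, he⟩ := TopologicalSpace.exists_dense_seq A
  set G : ℕ → Finset A := fun n => (Finset.range (n+1)).image e with hGdef
  have cex := fun n : ℕ => hcon (1/((n:ℝ)+1)) (G n) (by positivity)
  choose Bf iB τf hτ φf hφ1 hφcp hφm hbad using cex
  let ωlin : ∀ n : ℕ, A →ₗ[ℂ] ℂ := fun n => letI := iB n; (τf n).comp (φf n)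
  have hωapp : ∀ n a, ωlin n a = τf n (φf n a) := fun n a => rfl
  have hpos : ∀ n, ∀ b : A, 0 ≤ ωlin n (star b * b) := by
    intro n b
    letI := iB n
    obtain ⟨d, hd⟩ := cpPos (φf n) (hφcp n) b
    rw [hωapp, hd]
    exact (hτ n).pos d
  have hunit : ∀ n, ωlin n 1 = 1 := by
    intro n
    letI := iB n
    rw [hωapp, hφ1 n, (hτ n).unit]
  have hbound := fun n => posBound (ωlin n) (hpos n) (hunit n)
  have τbound : ∀ n, ∀ x : Bf n, ‖τf n x‖ ≤ 2 * ‖x‖ := by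
    intro n
    letI := iB n
    exact posBound (τf n) (hτ n).pos (hτ n).unit
  have hbnd : ∀ n, ∀ x : A, ‖ωlin n x‖ ≤ 2 * ‖x‖ := fun n x => by
    simpa using hbound n x
  let S : ℕ → WeakDual ℂ A := fun n =>
    StrongDual.toWeakDual (LinearMap.mkContinuous (ωlin n) 2 (hbnd n))
  have hSapp : ∀ n a, S n a = ωlin n a := fun n a => rfl
  have hK : IsCompact (WeakDual.toStrongDual ⁻¹' Metric.closedBall 0 2) :=
    WeakDual.isCompact_closedBall (E := A) (𝕜 := ℂ) 0 2
  have hmem : ∀ n, S n ∈ WeakDual.toStrongDual ⁻¹' Metric.closedBall 0 2 := by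
    intro n
    simp only [Set.mem_preimage, Metric.mem_closedBall, dist_zero_right]
    exact LinearMap.mkContinuous_norm_le _ (by norm_num) (hbnd n)
  obtain ⟨ω, hωK, hωcl⟩ := hK.exists_mapClusterPt (f := Filter.atTop) (u := S)
    (Filter.le_principal_iff.mpr (Filter.mem_map.mpr (Filter.Eventually.of_forall hmem)))
  set σ := (WeakDual.toStrongDual ω).toLinearMap with hσdef
  have hσapp : ∀ a, σ a = ω a := fun a => rfl
  have evalCl : ∀ a : A, MapClusterPt (ω a) Filter.atTop (fun n => S n a) := fun a =>
    hωcl.continuousAt_comp (WeakDual.eval_continuous a).continuousAt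
  have hσpos : ∀ a : A, 0 ≤ σ (star a * a) := by
    intro a
    exact clusterMemClosed isClosedNonnegC (fun n => hpos n a) (evalCl (star a * a))
  have hσunit : σ 1 = 1 := by
    refine clusterEqOfTendsto (evalCl 1) ?_
    have : (fun n => S n 1) = fun _ => (1:ℂ) := funext fun n => hunit n
    rw [this]
    exact tendsto_const_nhds
  have htr0 : ∀ i j : ℕ, ω (e i * e j) = ω (e j * e i) := by
    intro i j
    rw [← sub_eq_zero]
    have hcl : MapClusterPt (ω (e i * e j) - ω (e j * e i)) Filter.atTop
        (fun n => S n (e i * e j) - S n (e j * e i)) :=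
      hωcl.continuousAt_comp
        (((WeakDual.eval_continuous (e i * e j)).sub
          (WeakDual.eval_continuous (e j * e i))).continuousAt)
    refine clusterEqOfTendsto hcl ?_
    apply squeeze_zero_norm' (a := fun n : ℕ => 4 / ((n:ℝ)+1))
    · filter_upwards [Filter.eventually_ge_atTop (max i j)] with n hn
      letI := iB n
      have hain : e i ∈ G n := by
        rw [hGdef]
        exact Finset.mem_image_of_mem e (Finset.mem_range.mpr
          (Nat.lt_succ_of_le (le_trans (le_max_left i j) hn)))
      have hbin : e j ∈ G n := by
        rw [hGdef]
        exact Finset.mem_image_of_mem e (Finset.mem_range.mpr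
          (Nat.lt_succ_of_le (le_trans (le_max_right i j) hn)))
      set a := e i
      set b := e j
      have hab := hφm n a hain b hbin
      have hba := hφm n b hbin a hain
      have e1 : ‖τf n (φf n (a*b)) - τf n (φf n a * φf n b)‖
          ≤ 2 * ‖φf n (a*b) - φf n a * φf n b‖ := by
        rw [← map_sub]; exact τbound n _
      have e2 : ‖τf n (φf n (b*a)) - τf n (φf n b * φf n a)‖
          ≤ 2 * ‖φf n (b*a) - φf n b * φf n a‖ := by
        rw [← map_sub]; exact τbound n _
      have e3 : τf n (φf n a * φf n b) = τf n (φf n b * φf n a) := (hτ n).tracial _ _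
      have key : S n (a*b) - S n (b*a)
          = (τf n (φf n (a*b)) - τf n (φf n a * φf n b))
            - (τf n (φf n (b*a)) - τf n (φf n b * φf n a)) := by
        rw [hSapp, hSapp, hωapp, hωapp, e3]
        ring
      rw [key]
      calc ‖(τf n (φf n (a*b)) - τf n (φf n a * φf n b))
            - (τf n (φf n (b*a)) - τf n (φf n b * φf n a))‖
          ≤ ‖τf n (φf n (a*b)) - τf n (φf n a * φf n b)‖
            + ‖τf n (φf n (b*a)) - τf n (φf n b * φf n a)‖ :=
            by exact norm_sub_le _ _
        _ ≤ 2 * ‖φf n (a*b) - φf n a * φf n b‖ + 2 * ‖φf n (b*a) - φf n b * φf n a‖ :=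
            add_le_add e1 e2
        _ ≤ 2 * (1/((n:ℝ)+1)) + 2 * (1/((n:ℝ)+1)) := by
            have := hab.le
            have := hba.le
            gcongr
        _ = 4 / ((n:ℝ)+1) := by ring
    · apply Filter.Tendsto.div_atTop (tendsto_const_nhds (x := (4:ℝ)))
      exact Filter.tendsto_atTop_add_const_right _ 1 tendsto_natCast_atTop_atTop
  have hσtr : ∀ a b : A, σ (a * b) = σ (b * a) := by
    have hg : Continuous (fun p : A × A => ω (p.1 * p.2) - ω (p.2 * p.1)) := by
      have hωc : Continuous fun x : A => ω x := (WeakDual.toStrongDual ω).continuous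
      exact (hωc.comp (continuous_fst.mul continuous_snd)).sub
        (hωc.comp (continuous_snd.mul continuous_fst))
    have hdense : Dense (Set.range (Prod.map e e)) := he.prodMap he
    have heq : (fun p : A × A => ω (p.1 * p.2) - ω (p.2 * p.1)) = fun _ => 0 := by
      refine Continuous.ext_on hdense hg continuous_const ?_
      rintro p ⟨⟨i, j⟩, rfl⟩
      exact sub_eq_zero.mpr (htr0 i j)
    intro a b
    have h0 := congrFun heq (a, b)
    simp only at h0
    rw [hσapp, hσapp]
    exact sub_eq_zero.mp h0
  have hσts : IsTracialState σ := ⟨hσpos, hσunit, hσtr⟩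
  have hUopen : IsOpen (⋂ a ∈ F, (fun ψ : WeakDual ℂ A => ψ a) ⁻¹' Metric.ball (ω a) ε) :=
    isOpen_biInter_finset fun a _ => Metric.isOpen_ball.preimage (WeakDual.eval_continuous a)
  have hωU : ω ∈ ⋂ a ∈ F, (fun ψ : WeakDual ℂ A => ψ a) ⁻¹' Metric.ball (ω a) ε := by
    simp only [Set.mem_iInter, Set.mem_preimage, Metric.mem_ball]
    intro a _
    simpa using hε
  obtain ⟨n, hn⟩ := (mapClusterPt_iff_frequently.mp hωcl _ (hUopen.mem_nhds hωU)).exists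
  obtain ⟨a, haF, hge⟩ := hbad n σ hσts
  have hnU : S n a ∈ Metric.ball (ω a) ε := by
    simp only [Set.mem_iInter, Set.mem_preimage] at hn
    exact hn a haF
  rw [Metric.mem_ball, Complex.dist_eq] at hnU
  have heq2 : S n a = τf n (φf n a) := hωapp n a
  have heq3 : σ a = ω a := hσapp a
  rw [heq2, ← heq3] at hnU
  linarith
end

section
/- Let X be a compact metric space, A a unital simple C*-algebra, and h : C(X) → A a unital injective *-homomorphism. Then for every nonempty open subset O ⊆ X there exists c > 0 such that μ_{τ∘h}(O) ≥ c for every tracial state τ of A. -/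
open scoped ComplexOrder

open scoped ComplexStarModule

section Aux
variable {A : Type*} [CStarAlgebra A]

/-- monotonicity-type bound: positive functionals are bounded on selfadjoints. -/
lemma pos_selfadj_bound (σ : A →ₗ[ℂ] ℂ) (hσ : ∀ a : A, 0 ≤ σ (star a * a))
    {s : A} (hs : IsSelfAdjoint s) :
    ‖σ s‖ ≤ ‖s‖ * (σ 1).re := by
  letI := CStarAlgebra.spectralOrder A
  haveI := CStarAlgebra.spectralOrderedRing A
  have hmono : ∀ {x y : A}, x ≤ y → σ x ≤ σ y := by
    intro x y hxy
    rw [StarOrderedRing.le_iff] at hxy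
    obtain ⟨p, hp, rfl⟩ := hxy
    have h0 : 0 ≤ σ p := by
      induction hp using AddSubmonoid.closure_induction with
      | mem c hc => obtain ⟨d, rfl⟩ := hc; exact hσ d
      | zero => simp
      | add x y _ _ hx hy => rw [map_add]; exact add_nonneg hx hy
    calc σ x = σ x + 0 := by ring
    _ ≤ σ x + σ p := by exact add_le_add (le_refl _) h0
    _ = σ (x + p) := (map_add σ x p).symm
  have halg : ∀ r : ℝ, σ (algebraMap ℝ A r) = (r : ℂ) * σ 1 := by
    intro r
    rw [IsScalarTower.algebraMap_apply ℝ ℂ A, Algebra.algebraMap_eq_smul_one, map_smul,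
      smul_eq_mul]
    norm_num [Complex.coe_algebraMap]
  have h1 : σ s ≤ (‖s‖ : ℂ) * σ 1 := by
    have := hmono (hs.le_algebraMap_norm_self)
    rwa [halg] at this
  have h2 : -((‖s‖ : ℂ) * σ 1) ≤ σ s := by
    have := hmono (hs.neg_algebraMap_norm_le_self)
    rwa [map_neg, halg] at this
  have hσ1 : 0 ≤ σ 1 := by simpa using hσ 1
  obtain ⟨h1re, h1im⟩ := Complex.le_def.mp h1
  obtain ⟨h2re, h2im⟩ := Complex.le_def.mp h2
  obtain ⟨hσ1re, hσ1im⟩ := Complex.le_def.mp hσ1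
  have him : (σ s).im = 0 := by
    rw [h1im]
    simp [Complex.mul_im, ← hσ1im]
  have : σ s = (((σ s).re : ℝ) : ℂ) := Complex.ext rfl (by simp [him])
  rw [this, Complex.norm_real, Real.norm_eq_abs]
  rw [abs_le]
  constructor
  · have := h2re
    simp only [Complex.neg_re, Complex.mul_re, Complex.ofReal_re, Complex.ofReal_im,
      zero_mul, sub_zero, ← hσ1im] at this ⊢
    simpa using this
  · have := h1re
    simpa [Complex.mul_re, ← hσ1im] using this

lemma pos_bound (σ : A →ₗ[ℂ] ℂ) (hσ : ∀ a : A, 0 ≤ σ (star a * a)) (w : A) :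
    ‖σ w‖ ≤ 2 * ‖w‖ * (σ 1).re := by
  have hσ1 : 0 ≤ σ 1 := by simpa using hσ 1
  have hσ1re : 0 ≤ (σ 1).re := (Complex.le_def.mp hσ1).1
  have hR : ‖(ℜ w : A)‖ ≤ ‖w‖ := by
    rw [realPart_apply_coe, norm_smul]
    calc ‖(2 : ℝ)⁻¹‖ * ‖w + star w‖ ≤ (2 : ℝ)⁻¹ * (‖w‖ + ‖star w‖) := by
          gcongr
          · simp [abs_of_nonneg]
          · exact norm_add_le _ _
    _ = ‖w‖ := by rw [norm_star]; ring
  have hI : ‖(ℑ w : A)‖ ≤ ‖w‖ := by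
    rw [imaginaryPart_apply_coe, norm_smul, norm_smul]
    calc ‖-Complex.I‖ * (‖(2 : ℝ)⁻¹‖ * ‖w - star w‖)
        ≤ 1 * ((2 : ℝ)⁻¹ * (‖w‖ + ‖star w‖)) := by
          gcongr
          · simp [Complex.norm_I]
          · simp [abs_of_nonneg]
          · exact norm_sub_le _ _
    _ = ‖w‖ := by rw [norm_star]; ring
  have hdecomp : σ w = σ (ℜ w : A) + Complex.I * σ (ℑ w : A) := by
    conv_lhs => rw [← realPart_add_I_smul_imaginaryPart w]
    rw [map_add, map_smul, smul_eq_mul]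
  rw [hdecomp]
  calc ‖σ (ℜ w : A) + Complex.I * σ (ℑ w : A)‖
      ≤ ‖σ (ℜ w : A)‖ + ‖Complex.I * σ (ℑ w : A)‖ :=
        norm_add_le _ _
  _ = ‖σ (ℜ w : A)‖ + ‖σ (ℑ w : A)‖ := by
        rw [norm_mul]; simp
  _ ≤ ‖(ℜ w : A)‖ * (σ 1).re + ‖(ℑ w : A)‖ * (σ 1).re := by
        gcongr
        · exact pos_selfadj_bound σ hσ (ℜ w).2
        · exact pos_selfadj_bound σ hσ (ℑ w).2
  _ ≤ ‖w‖ * (σ 1).re + ‖w‖ * (σ 1).re := by gcongr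
  _ = 2 * ‖w‖ * (σ 1).re := by ring

end Aux


universe u v

/-- for a unital monomorphism `h : C(X) → A` into a unital simple
C*-algebra, the measures induced by traces are uniformly bounded below on each
nonempty open set. -/
theorem stmt10 {X : Type u} [MetricSpace X] [CompactSpace X] [MeasurableSpace X] [BorelSpace X]
    {A : Type v} [CStarAlgebra A] (hsimple : IsSimpleCStar A)
    (h : C(X, ℂ) →⋆ₐ[ℂ] A) (hinj : Function.Injective h)
    (O : Set X) (hO : IsOpen O) (hne : O.Nonempty) :
    ∃ c : ℝ, 0 < c ∧ ∀ τ : A →ₗ[ℂ] ℂ, IsTracialState τ →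
      ∀ μ : MeasureTheory.Measure X, RepMeasure h.toAlgHom.toLinearMap τ μ →
        ENNReal.ofReal c ≤ μ O := by
  classical
  obtain ⟨x₀, hx₀⟩ := hne
  obtain ⟨r, hr, hball⟩ := Metric.isOpen_iff.mp hO x₀ hx₀
  set f : C(X, ℝ) := ⟨fun x => max 0 (1 - dist x x₀ / r), by fun_prop⟩ with hf_def
  have hf0 : ∀ x, 0 ≤ f x := fun x => le_max_left 0 _
  have hf1 : ∀ x, f x ≤ 1 := by
    intro x
    apply max_le (by norm_num)
    have : 0 ≤ dist x x₀ / r := div_nonneg dist_nonneg hr.le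
    linarith
  have hfx₀ : f x₀ = 1 := by simp [hf_def]
  have hfO : ∀ x, x ∉ O → f x = 0 := by
    intro x hx
    have hxball : x ∉ Metric.ball x₀ r := fun hmem => hx (hball hmem)
    rw [Metric.mem_ball, not_lt] at hxball
    have hle : 1 - dist x x₀ / r ≤ 0 := by
      have : 1 ≤ dist x x₀ / r := (one_le_div hr).mpr hxball
      linarith
    simp only [hf_def, ContinuousMap.coe_mk]
    exact max_eq_left hle
  set g : C(X, ℝ) := ⟨fun x => Real.sqrt (f x), Real.continuous_sqrt.comp f.continuous⟩
    with hg_def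
  have hkey : star (ofRealCM g) * ofRealCM g = ofRealCM f := by
    ext x
    simp only [ContinuousMap.mul_apply, ContinuousMap.star_apply, ofRealCM,
      ContinuousMap.coe_mk, Complex.star_def, Complex.conj_ofReal, ← Complex.ofReal_mul,
      hg_def]
    norm_cast
    exact Real.mul_self_sqrt (hf0 x)
  set b : A := h (ofRealCM g) with hb_def
  set a : A := h (ofRealCM f) with ha_def
  have hbs : star b = b := by
    rw [hb_def, ← map_star]
    congr 1
    ext x
    simp [ofRealCM, Complex.star_def, Complex.conj_ofReal, hg_def]
  have hba : star b * b = a := by rw [hb_def, ha_def, ← map_star, ← map_mul, hkey]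
  have hbb : b * b = a := by rw [← hba, hbs]
  have ha0 : a ≠ 0 := by
    intro hzero
    have h0' : ofRealCM f = 0 := by
      apply hinj
      rw [← ha_def, hzero, map_zero]
    have := congrArg (fun φ : C(X, ℂ) => φ x₀) h0'
    simp [ofRealCM, hfx₀] at this
  set T : Set A := {y | ∃ u v : A, y = u * a * v} with hT_def
  set G : AddSubgroup A := AddSubgroup.closure T with hG_def
  have hmulG : ∀ (x : A), ∀ z ∈ G, x * z ∈ G := by
    intro x z hz
    induction hz using AddSubgroup.closure_induction with
    | mem y hy =>
        obtain ⟨u, v, rfl⟩ := hy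
        exact AddSubgroup.subset_closure ⟨x * u, v, by simp [mul_assoc]⟩
    | zero => rw [mul_zero]; exact G.zero_mem
    | add z₁ z₂ h₁ h₂ ih₁ ih₂ => rw [mul_add]; exact G.add_mem ih₁ ih₂
    | neg z' hz' ih => rw [mul_neg]; exact G.neg_mem ih
  have hGmul : ∀ (x : A), ∀ z ∈ G, z * x ∈ G := by
    intro x z hz
    induction hz using AddSubgroup.closure_induction with
    | mem y hy =>
        obtain ⟨u, v, rfl⟩ := hy
        exact AddSubgroup.subset_closure ⟨u, v * x, by simp [mul_assoc]⟩
    | zero => rw [zero_mul]; exact G.zero_mem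
    | add z₁ z₂ h₁ h₂ ih₁ ih₂ => rw [add_mul]; exact G.add_mem ih₁ ih₂
    | neg z' hz' ih => rw [neg_mul]; exact G.neg_mem ih
  set I : TwoSidedIdeal A := TwoSidedIdeal.mk' (closure (G : Set A))
    (subset_closure G.zero_mem)
    (fun hx hy => map_mem_closure₂ continuous_add hx hy fun p hp q hq => G.add_mem hp hq)
    (fun hx => map_mem_closure continuous_neg hx fun p hp => G.neg_mem hp)
    (fun {x y} hy => map_mem_closure (f := fun p => x * p) (continuous_mul_left x) hy fun p hp => hmulG x p hp)
    (fun {x y} hx => map_mem_closure (f := fun p => p * y) (continuous_mul_right y) hx fun p hp => hGmul y p hp)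
    with hI_def
  have hIclosed : IsClosed (I : Set A) := by
    rw [hI_def, TwoSidedIdeal.coe_mk']
    exact isClosed_closure
  have haI : a ∈ I := by
    rw [hI_def, TwoSidedIdeal.mem_mk']
    exact subset_closure (AddSubgroup.subset_closure ⟨1, 1, by simp⟩)
  have hItop : I = ⊤ := by
    rcases hsimple I hIclosed with hbot | htop
    · exfalso
      apply ha0
      rw [hbot, TwoSidedIdeal.mem_bot] at haI
      exact haI
    · exact htop
  have h1mem : (1 : A) ∈ closure (G : Set A) := by
    have h1I : (1 : A) ∈ I := hItop ▸ TwoSidedIdeal.mem_top A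
    rwa [hI_def, TwoSidedIdeal.mem_mk'] at h1I
  obtain ⟨z, hzG, hz14⟩ := Metric.mem_closure_iff.mp h1mem (4⁻¹ : ℝ) (by norm_num)
  have hσ_facts : ∀ (τ : A →ₗ[ℂ] ℂ), IsTracialState τ → ∀ u v : A,
      ‖τ (u * a * v)‖ ≤ 2 * ‖v * u‖ * (τ a).re := by
    intro τ hτ u v
    set σ : A →ₗ[ℂ] ℂ := τ ∘ₗ (LinearMap.mulLeft ℂ b) ∘ₗ (LinearMap.mulRight ℂ b) with hσ_def
    have hσ_apply : ∀ x, σ x = τ (b * (x * b)) := fun x => rfl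
    have hσ_pos : ∀ x : A, 0 ≤ σ (star x * x) := by
      intro x
      have heq : b * ((star x * x) * b) = star (x * b) * (x * b) := by
        rw [star_mul, hbs]
        simp [mul_assoc]
      rw [hσ_apply, heq]
      exact hτ.pos (x * b)
    have hσ1 : σ 1 = τ a := by rw [hσ_apply, one_mul, hbb]
    have htrace : τ (u * a * v) = σ (v * u) := by
      rw [hσ_apply]
      calc τ (u * a * v) = τ (v * (u * a)) := hτ.tracial _ _
      _ = τ ((v * u) * a) := by rw [mul_assoc]
      _ = τ (a * (v * u)) := hτ.tracial _ _
      _ = τ (b * (b * (v * u))) := by rw [← hbb, mul_assoc]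
      _ = τ ((b * (v * u)) * b) := hτ.tracial _ _
      _ = τ (b * ((v * u) * b)) := by rw [mul_assoc]
    rw [htrace]
    have hbd := pos_bound σ hσ_pos (v * u)
    rwa [hσ1] at hbd
  have hzbound : ∃ K : ℝ, 0 ≤ K ∧ ∀ τ : A →ₗ[ℂ] ℂ, IsTracialState τ →
      ‖τ z‖ ≤ K * (τ a).re := by
    clear hz14
    induction hzG using AddSubgroup.closure_induction with
    | mem y hy =>
        obtain ⟨u, v, rfl⟩ := hy
        exact ⟨2 * ‖v * u‖, by positivity, fun τ hτ => hσ_facts τ hτ u v⟩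
    | zero => exact ⟨0, le_refl 0, fun τ hτ => by simp⟩
    | add z₁ z₂ h₁ h₂ ih₁ ih₂ =>
        obtain ⟨K₁, hK₁, hb₁⟩ := ih₁
        obtain ⟨K₂, hK₂, hb₂⟩ := ih₂
        refine ⟨K₁ + K₂, by positivity, fun τ hτ => ?_⟩
        rw [map_add, add_mul]
        exact le_trans (norm_add_le _ _) (add_le_add (hb₁ τ hτ) (hb₂ τ hτ))
    | neg z' hz' ih =>
        obtain ⟨K, hK, hb'⟩ := ih
        refine ⟨K, hK, fun τ hτ => ?_⟩
        rw [map_neg, norm_neg]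
        exact hb' τ hτ
  obtain ⟨K, hK0, hKb⟩ := hzbound
  refine ⟨(2 * (K + 1))⁻¹, by positivity, ?_⟩
  intro τ hτ μ hμ
  obtain ⟨hprob, hreg, hint⟩ := hμ
  have hτa : τ a = ((∫ x, f x ∂μ : ℝ) : ℂ) := hint f
  have hta_re : (τ a).re = ∫ x, f x ∂μ := by rw [hτa, Complex.ofReal_re]
  have hta_nonneg : 0 ≤ (τ a).re := by
    have hp := hτ.pos b
    rw [hba] at hp
    exact (Complex.le_def.mp hp).1
  have hτ1z : ‖τ (1 - z)‖ ≤ 2 * ‖(1 : A) - z‖ := by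
    have hbd := pos_bound τ hτ.pos ((1 : A) - z)
    rw [hτ.unit] at hbd
    simpa using hbd
  have hz_norm : ‖(1 : A) - z‖ < 4⁻¹ := by rwa [dist_eq_norm] at hz14
  have habs1 : (1 : ℝ) ≤ ‖τ z‖ + ‖τ (1 - z)‖ := by
    have hsum : τ z + τ (1 - z) = 1 := by
      rw [← map_add, show z + (1 - z) = 1 by abel, hτ.unit]
    calc (1 : ℝ) = ‖(1 : ℂ)‖ := by simp
    _ = ‖τ z + τ (1 - z)‖ := by rw [hsum]
    _ ≤ _ := norm_add_le _ _
  have hτz_lb : (2 : ℝ)⁻¹ ≤ ‖τ z‖ := by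
    have h2 : ‖τ (1 - z)‖ < 2⁻¹ := lt_of_le_of_lt hτ1z (by nlinarith [hz_norm])
    linarith
  have hKt : (2 : ℝ)⁻¹ ≤ K * (τ a).re := le_trans hτz_lb (hKb τ hτ)
  have hc_le : (2 * (K + 1))⁻¹ ≤ (τ a).re := by
    have hpos : (0 : ℝ) < 2 * (K + 1) := by positivity
    rw [← one_div, div_le_iff₀ hpos]
    nlinarith
  calc ENNReal.ofReal (2 * (K + 1))⁻¹ ≤ ENNReal.ofReal (∫ x, f x ∂μ) := by
        apply ENNReal.ofReal_le_ofReal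
        rw [← hta_re]
        exact hc_le
  _ ≤ μ O := MeasureTheory.integral_le_measure (fun x _ => hf1 x)
        (fun x hx => le_of_eq (hfO x hx))
end
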